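/- arXiv:1104.4976 — 2 statements merged into one kernel-verified Lean document; each statement's English description precedes it below -/
import Mathlib

section
/- Let X be a smooth complex algebraic variety and Y₁, Y₂ closed subsets of X with Y₂ ⊆ Y₁. In the homotopy category of bounded complexes of finite correspondences H^b(Cor_ℂ), the morphisms c_{Y₁∖Y₂}(X∖Y₂) → c_{Y₁}X → c_{Y₂}X induced by the inclusions, together with the connecting morphism c_{Y₂}X → c_{Y₁∖Y₂}(X∖Y₂)[1] given on components by −id on [X∖Y₂] and −incl : [X∖Y₁] → [X∖Y₂], form a distinguished triangle. -/
set_option linter.unusedSectionVars false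

/-!
# Statement 1 (Lemma `lemma-distingueshed-triangles` (1))

Let `X` be a smooth complex algebraic variety and `Y₁, Y₂` closed subsets of
`X` with `Y₂ ⊆ Y₁`.  In the homotopy category of bounded complexes of finite
correspondences `H^b(Cor_ℂ)`, the morphisms
`c_{Y₁∖Y₂}(X∖Y₂) → c_{Y₁}X → c_{Y₂}X` induced by the inclusions, together
with the connecting morphism `c_{Y₂}X → c_{Y₁∖Y₂}(X∖Y₂)[1]` given on
components by `−id` on `[X∖Y₂]` (and `−incl : [X∖Y₁] → [X∖Y₂]` as the
differential of the shifted complex), form a distinguished triangle.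

The category `Cor_ℂ` of finite correspondences is not available in Mathlib;
it enters as an abstract additive category `C`, together with the objects
`oX = [X]`, `oU1 = [X∖Y₁]`, `oU2 = [X∖Y₂]` and the morphisms
`i : [X∖Y₁] → [X∖Y₂]`, `j : [X∖Y₂] → [X]` given by (the graphs of) the open
immersions.  For a morphism `f : A ⟶ B`, `twoComplex f` is the cochain
complex `A → B` with `A` in degree `−1` and `B` in degree `0`; thus
`c_{Y₂}X = twoComplex j`, `c_{Y₁}X = twoComplex (i ≫ j)`, and
`c_{Y₁∖Y₂}(X∖Y₂) = twoComplex i`.  We work in the homotopy category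
`HomotopyCategory C (ComplexShape.up ℤ)` with its pretriangulated structure
(our two-term complexes are bounded, so this contains `H^b(Cor_ℂ)` as a full
pretriangulated subcategory).
-/

open CategoryTheory Category Limits Pretriangulated ZeroObject

universe v u

variable {C : Type u} [Category.{v} C] [Preadditive C] [HasZeroObject C]
  [HasBinaryBiproducts C]

/-- The graded object of the two-term complex: `A` in degree `-1`, `B` in
degree `0`, and `0` elsewhere. -/
noncomputable def twoOb (A B : C) (n : ℤ) : C :=
  if n = -1 then A else if n = 0 then B else 0

/-- The differential of the two-term complex `A → B`. -/
noncomputable def twoD {A B : C} (f : A ⟶ B) :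
    ∀ n : ℤ, twoOb A B n ⟶ twoOb A B (n + 1) := fun n =>
  if h : n = -1 then
    eqToHom (by subst h; rfl) ≫ f ≫ eqToHom (by subst h; rfl)
  else 0

lemma twoSq {A B : C} (f : A ⟶ B) : ∀ n : ℤ, twoD f n ≫ twoD f (n + 1) = 0 := by
  intro n
  by_cases h : n = -1
  · subst h
    have h2 : twoD f ((-1 : ℤ) + 1) = 0 := by
      simp only [twoD]
      rw [dif_neg (by decide)]
    rw [h2, comp_zero]
  · simp only [twoD]
    rw [dif_neg h, zero_comp]

/-- The two-term cochain complex `A → B` concentrated in degrees `-1, 0`;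
for `f = ([X∖Y] → [X])` this is the complex `c_Y X`. -/
noncomputable def twoComplex {A B : C} (f : A ⟶ B) : CochainComplex C ℤ :=
  CochainComplex.of (twoOb A B) (twoD f) (twoSq f)

/-- The components of a morphism of two-term complexes. -/
noncomputable def twoMapF {A B A' B' : C} (gA : A ⟶ A') (gB : B ⟶ B') :
    ∀ n : ℤ, twoOb A B n ⟶ twoOb A' B' n := fun n =>
  if h : n = -1 then eqToHom (by subst h; rfl) ≫ gA ≫ eqToHom (by subst h; rfl)
  else if h0 : n = 0 then
    eqToHom (by subst h0; rfl) ≫ gB ≫ eqToHom (by subst h0; rfl)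
  else 0

lemma twoMapComm {A B A' B' : C} (f : A ⟶ B) (f' : A' ⟶ B')
    (gA : A ⟶ A') (gB : B ⟶ B') (w : gA ≫ f' = f ≫ gB) :
    ∀ n : ℤ, twoMapF gA gB n ≫ twoD f' n = twoD f n ≫ twoMapF gA gB (n + 1) := by
  intro n
  by_cases h : n = -1
  · subst h
    simp only [twoMapF, twoD]
    norm_num
    rw [reassoc_of% w]
  · by_cases h0 : n = 0
    · subst h0
      simp only [twoMapF, twoD]
      norm_num
    · simp only [twoMapF, twoD, dif_neg h, dif_neg h0, zero_comp, comp_zero]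

/-- The morphism of two-term complexes induced by a commutative square. -/
noncomputable def twoMap {A B A' B' : C} (f : A ⟶ B) (f' : A' ⟶ B')
    (gA : A ⟶ A') (gB : B ⟶ B') (w : gA ≫ f' = f ≫ gB) :
    twoComplex f ⟶ twoComplex f' :=
  CochainComplex.ofHom (twoMapF gA gB)
    (by simpa only [twoComplex, CochainComplex.of_d] using twoMapComm f f' gA gB w)

/-- The connecting morphism `c_{Y₂}X ⟶ (c_{Y₁∖Y₂}(X∖Y₂))[1]`, given by
`−𝟙 [X∖Y₂]` in degree `-1` (the differential of the target being
`−incl : [X∖Y₁] → [X∖Y₂]`). -/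
noncomputable def connMap {oU1 oU2 oX : C} (i : oU1 ⟶ oU2) (j : oU2 ⟶ oX) :
    twoComplex j ⟶ (twoComplex i)⟦(1 : ℤ)⟧ where
  f n :=
    if h : n = -1 then
      eqToHom (by subst h; rfl) ≫ (-𝟙 oU2) ≫ eqToHom (by subst h; rfl)
    else 0
  comm' := by
    rintro n m (rfl : n + 1 = m)
    by_cases h : n = -1
    · subst h
      simp [twoComplex, twoD, twoOb, CochainComplex.of]
      simp [CochainComplex.of.d, twoD]
      erw [smul_zero, comp_zero, comp_zero, neg_zero]
    · by_cases h2 : n + 1 = -1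
      · simp [twoComplex, twoD, twoOb, CochainComplex.of, h, h2]
        exact zero_comp.trans zero_comp.symm
      · simp [h, h2]
        exact zero_comp.trans comp_zero.symm

/-!
`twoComplex f` is the mapping cone of `f`, viewed as a morphism of complexes concentrated
in degree `0`. Under this identification `twoMap` becomes `mappingCone.map` and `connMap`
becomes the third morphism of the triangle `cone f ⟶ cone (f ≫ g) ⟶ cone g ⟶ (cone f)⟦1⟧`,
which is distinguished in the homotopy category (it is the triangle of the octahedral axiom).
-/

open CochainComplex HomComplex mappingCone

section SingleFunctor

variable {D : Type*} [Category D] [Preadditive D] [HasZeroObject D]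

noncomputable def singleFunctorXIso (A : D) : ((singleFunctor D 0).obj A).X 0 ≅ A :=
  HomologicalComplex.singleObjXSelf _ 0 A

lemma singleFunctor_map_f_zero {A B : D} (g : A ⟶ B) :
    ((singleFunctor D 0).map g).f 0 =
      (singleFunctorXIso A).hom ≫ g ≫ (singleFunctorXIso B).inv :=
  HomologicalComplex.single_map_f_self _ _ g

end SingleFunctor

lemma mappingCone_singleFunctor_hom_ext {A B : C}
    {φ : (singleFunctor C 0).obj A ⟶ (singleFunctor C 0).obj B} {K : CochainComplex C ℤ}
    {g g' : mappingCone φ ⟶ K}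
    (h₁ : (inl φ).v 0 (-1) rfl ≫ g.f (-1) = (inl φ).v 0 (-1) rfl ≫ g'.f (-1))
    (h₀ : (inr φ).f 0 ≫ g.f 0 = (inr φ).f 0 ≫ g'.f 0) : g = g' := by
  have hA (n : ℤ) (hn : n ≠ 0) : IsZero (((singleFunctor C 0).obj A).X n) :=
    HomologicalComplex.isZero_single_obj_X _ _ _ _ hn
  have hB (n : ℤ) (hn : n ≠ 0) : IsZero (((singleFunctor C 0).obj B).X n) :=
    HomologicalComplex.isZero_single_obj_X _ _ _ _ hn
  ext n
  by_cases hn₁ : n = -1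
  · subst hn₁
    exact ext_from φ 0 (-1) rfl h₁ ((hB _ (by norm_num)).eq_of_src _ _)
  by_cases hn₀ : n = 0
  · subst hn₀
    exact ext_from φ 1 0 rfl ((hA _ (by norm_num)).eq_of_src _ _) h₀
  exact ((isZero_X_iff φ n).2 ⟨hA _ (by omega), hB _ hn₀⟩).eq_of_src _ _

section TwoComplex

variable {A B : C} (f : A ⟶ B)

noncomputable def twoComplexXIsoNegOne : (twoComplex f).X (-1) ≅ A := Iso.refl A

noncomputable def twoComplexXIsoZero : (twoComplex f).X 0 ≅ B := Iso.refl B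

lemma twoComplex_d_neg_one_zero :
    (twoComplex f).d (-1) 0 =
      (twoComplexXIsoNegOne f).hom ≫ f ≫ (twoComplexXIsoZero f).inv := by
  refine (CochainComplex.of_d _ (twoD f) (-1)).trans ?_
  rw [twoD, dif_pos rfl]
  rfl

lemma twoComplex_d_eq_zero {p q : ℤ} (hp : p ≠ -1) : (twoComplex f).d p q = 0 := by
  by_cases h : p + 1 = q
  · subst h
    refine (CochainComplex.of_d _ (twoD f) p).trans ?_
    rw [twoD, dif_neg hp]
    rfl
  · exact (twoComplex f).shape _ _ h

lemma isZero_twoComplex_X {n : ℤ} (h₁ : n ≠ -1) (h₀ : n ≠ 0) :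
    IsZero ((twoComplex f).X n) := by
  change IsZero (twoOb A B n)
  rw [twoOb, if_neg h₁, if_neg h₀]
  exact isZero_zero C

lemma twoComplex_hom_ext {K : CochainComplex C ℤ} {g g' : twoComplex f ⟶ K}
    (h₁ : g.f (-1) = g'.f (-1)) (h₀ : g.f 0 = g'.f 0) : g = g' := by
  ext n
  by_cases hn₁ : n = -1
  · subst hn₁
    exact h₁
  by_cases hn₀ : n = 0
  · subst hn₀
    exact h₀
  exact (isZero_twoComplex_X f hn₁ hn₀).eq_of_src _ _

/- `φ` is only required to be equal to `(singleFunctor C 0).map f`, so that `c_{Y₁}X` can be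
compared with the cone of `(singleFunctor C 0).map i ≫ (singleFunctor C 0).map j`. -/
variable {φ : (singleFunctor C 0).obj A ⟶ (singleFunctor C 0).obj B}
  (hφ : (singleFunctor C 0).map f = φ)

noncomputable def twoComplexToMappingCone : twoComplex f ⟶ mappingCone φ :=
  lift φ (Cocycle.mk (Cochain.toSingleMk (twoComplexXIsoNegOne f).hom (neg_add_cancel 1)) 2 rfl
      (by
        rw [Cochain.δ_toSingleMk _ _ _ (-2) (by norm_num), twoComplex_d_eq_zero f (by norm_num)]
        simp))
    (Cochain.toSingleMk (twoComplexXIsoZero f).hom (add_zero 0)) (by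
      subst hφ
      rw [Cochain.δ_toSingleMk _ _ _ (-1) (by norm_num), twoComplex_d_neg_one_zero,
        Cocycle.mk_coe, ← Cochain.toSingleMk_postcomp]
      simp)

noncomputable def mappingConeToTwoComplex : mappingCone φ ⟶ twoComplex f :=
  desc φ (Cochain.fromSingleMk (twoComplexXIsoNegOne f).inv (zero_add (-1)))
    (Cocycle.homOf (Cocycle.fromSingleMk (twoComplexXIsoZero f).inv (add_zero 0) 1 (zero_add 1)
      (by rw [twoComplex_d_eq_zero f (by norm_num), comp_zero]))) (by
      subst hφ
      rw [Cochain.δ_fromSingleMk _ _ _ 0 (by norm_num), twoComplex_d_neg_one_zero,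
        Cochain.ofHom_comp, Cocycle.cochain_ofHom_homOf_eq_coe, Cocycle.fromSingleMk_coe,
        ← Cochain.fromSingleMk_precomp]
      simp)

lemma twoComplexToMappingCone_f_neg_one :
    (twoComplexToMappingCone f hφ).f (-1) =
      (twoComplexXIsoNegOne f).hom ≫ (singleFunctorXIso A).inv ≫ (inl φ).v 0 (-1) rfl := by
  rw [twoComplexToMappingCone, lift_f _ _ _ _ (-1) 0 rfl,
    Cochain.toSingleMk_v_eq_zero _ _ _ _ _ (by norm_num)]
  simp only [Int.reduceNeg, Cocycle.mk_coe, Cochain.toSingleMk_v, zero_comp, add_zero]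
  exact assoc _ _ _

lemma twoComplexToMappingCone_f_zero :
    (twoComplexToMappingCone f hφ).f 0 =
      (twoComplexXIsoZero f).hom ≫ (singleFunctorXIso B).inv ≫ (inr φ).f 0 := by
  rw [twoComplexToMappingCone, lift_f _ _ _ _ 0 1 rfl]
  simp only [Cocycle.mk_coe, zero_comp, Cochain.toSingleMk_v, zero_add,
    Cochain.toSingleMk_v_eq_zero _ _ _ _ _ (show (0 : ℤ) ≠ -1 by norm_num)]
  exact assoc _ _ _

lemma inl_v_mappingConeToTwoComplex_f :
    (inl φ).v 0 (-1) rfl ≫ (mappingConeToTwoComplex f hφ).f (-1) =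
      (singleFunctorXIso A).hom ≫ (twoComplexXIsoNegOne f).inv := by
  simp only [mappingConeToTwoComplex, inl_v_desc_f, Cochain.fromSingleMk_v]
  rfl

lemma inr_f_mappingConeToTwoComplex_f :
    (inr φ).f 0 ≫ (mappingConeToTwoComplex f hφ).f 0 =
      (singleFunctorXIso B).hom ≫ (twoComplexXIsoZero f).inv := by
  simp only [mappingConeToTwoComplex, inr_f_desc_f, Cocycle.homOf_f, Cocycle.fromSingleMk_coe,
    Cochain.fromSingleMk_v]
  rfl

noncomputable def mappingConeIsoTwoComplex : mappingCone φ ≅ twoComplex f where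
  hom := mappingConeToTwoComplex f hφ
  inv := twoComplexToMappingCone f hφ
  hom_inv_id := mappingCone_singleFunctor_hom_ext
    (by simp [reassoc_of% inl_v_mappingConeToTwoComplex_f, twoComplexToMappingCone_f_neg_one])
    (by simp [reassoc_of% inr_f_mappingConeToTwoComplex_f, twoComplexToMappingCone_f_zero])
  inv_hom_id := twoComplex_hom_ext f
    (by simp [inl_v_mappingConeToTwoComplex_f, twoComplexToMappingCone_f_neg_one])
    (by simp [inr_f_mappingConeToTwoComplex_f, twoComplexToMappingCone_f_zero])

end TwoComplex

section TwoMap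

variable {A B A' B' : C} (f : A ⟶ B) (f' : A' ⟶ B') (gA : A ⟶ A') (gB : B ⟶ B')
  (w : gA ≫ f' = f ≫ gB)

lemma twoMap_f_neg_one : (twoMap f f' gA gB w).f (-1) =
    (twoComplexXIsoNegOne f).hom ≫ gA ≫ (twoComplexXIsoNegOne f').inv := by
  change twoMapF gA gB (-1) = _
  rw [twoMapF, dif_pos rfl]
  rfl

lemma twoMap_f_zero : (twoMap f f' gA gB w).f 0 =
    (twoComplexXIsoZero f).hom ≫ gB ≫ (twoComplexXIsoZero f').inv := by
  change twoMapF gA gB 0 = _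
  rw [twoMapF, dif_neg (by norm_num), dif_pos rfl]
  rfl

lemma mappingCone_map_comp_mappingConeIsoTwoComplex_hom
    {φ : (singleFunctor C 0).obj A ⟶ (singleFunctor C 0).obj B}
    {φ' : (singleFunctor C 0).obj A' ⟶ (singleFunctor C 0).obj B'}
    (hφ : (singleFunctor C 0).map f = φ) (hφ' : (singleFunctor C 0).map f' = φ')
    {a : (singleFunctor C 0).obj A ⟶ (singleFunctor C 0).obj A'}
    {b : (singleFunctor C 0).obj B ⟶ (singleFunctor C 0).obj B'}
    (ha : (singleFunctor C 0).map gA = a) (hb : (singleFunctor C 0).map gB = b)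
    (comm : φ ≫ b = a ≫ φ') :
    mappingCone.map φ φ' a b comm ≫ (mappingConeIsoTwoComplex f' hφ').hom =
      (mappingConeIsoTwoComplex f hφ).hom ≫ twoMap f f' gA gB w := by
  subst ha hb
  apply mappingCone_singleFunctor_hom_ext
  · simp [mappingCone.map, mappingConeIsoTwoComplex, twoMap_f_neg_one, singleFunctor_map_f_zero,
      inl_v_mappingConeToTwoComplex_f, reassoc_of% inl_v_mappingConeToTwoComplex_f]
  · simp [mappingCone.map, mappingConeIsoTwoComplex, twoMap_f_zero, singleFunctor_map_f_zero,
      inr_f_mappingConeToTwoComplex_f, reassoc_of% inr_f_mappingConeToTwoComplex_f]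

end TwoMap

section ConnMap

variable {oU1 oU2 oX : C} (i : oU1 ⟶ oU2) (j : oU2 ⟶ oX)

lemma connMap_f_neg_one : (connMap i j).f (-1) =
    -((twoComplexXIsoNegOne j).hom ≫ (twoComplexXIsoZero i).inv) := by
  dsimp only [connMap]
  rw [dif_pos rfl, Preadditive.neg_comp, Preadditive.comp_neg, id_comp]
  rfl

lemma connMap_f_eq_zero {n : ℤ} (hn : n ≠ -1) : (connMap i j).f n = 0 := dif_neg hn

/-- The sign `-𝟙` in `connMap` is the sign of `-fst φ`, which defines `(triangle φ).mor₃`. -/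
lemma triangle_mor₃_comp_mappingConeIsoTwoComplex_hom :
    (triangle ((singleFunctor C 0).map j)).mor₃ ≫
      (inr ((singleFunctor C 0).map i) ≫ (mappingConeIsoTwoComplex i rfl).hom)⟦(1 : ℤ)⟧' =
      (mappingConeIsoTwoComplex j rfl).hom ≫ connMap i j := by
  apply mappingCone_singleFunctor_hom_ext
  · rw [HomologicalComplex.comp_f, HomologicalComplex.comp_f, connMap_f_neg_one]
    refine (inl_v_triangle_mor₃_f_assoc _ 0 (-1) rfl _).trans ?_
    change (-_) ≫ (inr _ ≫ (mappingConeIsoTwoComplex i rfl).hom).f 0 = _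
    rw [HomologicalComplex.comp_f]
    simp [mappingConeIsoTwoComplex, inr_f_mappingConeToTwoComplex_f,
      reassoc_of% inl_v_mappingConeToTwoComplex_f]
  · rw [HomologicalComplex.comp_f, HomologicalComplex.comp_f,
      connMap_f_eq_zero i j (by norm_num), comp_zero, comp_zero]
    exact (inr_f_triangle_mor₃_f_assoc _ 0 _).trans zero_comp

noncomputable def mappingConeCompTriangleIso :
    mappingConeCompTriangle ((singleFunctor C 0).map i) ((singleFunctor C 0).map j) ≅
      Triangle.mk (twoMap i (i ≫ j) (𝟙 oU1) j (by simp)) (twoMap (i ≫ j) j i (𝟙 oX) (by simp))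
        (connMap i j) :=
  Triangle.isoMk _ _ (mappingConeIsoTwoComplex i rfl)
    (mappingConeIsoTwoComplex (i ≫ j) ((singleFunctor C 0).map_comp i j))
    (mappingConeIsoTwoComplex j rfl)
    (mappingCone_map_comp_mappingConeIsoTwoComplex_hom _ _ _ _ (by simp) _ _
      ((singleFunctor C 0).map_id _) rfl (by simp))
    (mappingCone_map_comp_mappingConeIsoTwoComplex_hom _ _ _ _ (by simp) _ _
      rfl ((singleFunctor C 0).map_id _) (by simp))
    ((assoc _ _ _).trans (Eq.trans (congrArg (_ ≫ ·) (Functor.map_comp _ _ _).symm)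
      (triangle_mor₃_comp_mappingConeIsoTwoComplex_hom i j)))

end ConnMap

/-- The triangle
`c_{Y₁∖Y₂}(X∖Y₂) → c_{Y₁}X → c_{Y₂}X → c_{Y₁∖Y₂}(X∖Y₂)[1]`
is distinguished in the homotopy category of complexes of finite
correspondences. -/
theorem c_triangle_distinguished
    -- `[X] `, `[X∖Y₁]`, `[X∖Y₂]` in the category of finite correspondences
    (oX oU1 oU2 : C)
    -- the open immersions `X∖Y₁ ↪ X∖Y₂ ↪ X`, as finite correspondences
    (i : oU1 ⟶ oU2) (j : oU2 ⟶ oX) :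
    Pretriangulated.Triangle.mk
      ((HomotopyCategory.quotient C (ComplexShape.up ℤ)).map
        (twoMap i (i ≫ j) (𝟙 oU1) j (by simp)))
      ((HomotopyCategory.quotient C (ComplexShape.up ℤ)).map
        (twoMap (i ≫ j) j i (𝟙 oX) (by simp)))
      ((HomotopyCategory.quotient C (ComplexShape.up ℤ)).map (connMap i j) ≫
        ((HomotopyCategory.quotient C
          (ComplexShape.up ℤ)).commShiftIso (1 : ℤ)).hom.app (twoComplex i))
      ∈ distTriang (HomotopyCategory C (ComplexShape.up ℤ)) :=
  isomorphic_distinguished _ (HomotopyCategory.mappingConeCompTriangleh_distinguished _ _) _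
    ((HomotopyCategory.quotient C (ComplexShape.up ℤ)).mapTriangle.mapIso
      (mappingConeCompTriangleIso i j)).symm
end

section
/- Let X be a smooth connected complex algebraic variety. Then the kernel of the natural surjection H¹(G_𝓗(X,2)) → H¹(G_HS(X,2)) equals the image of ⊕_{x∈X^{(1)}} ℂ*⊗_ℤℚ in H¹(G_𝓗(X,2)); equivalently, under the identification H¹(G_𝓗(X,2)) ≅ H³_{𝓗,alg}(X,ℚ(2)), the subgroup H¹_𝓗(ℂ,ℚ(1))·H²_𝓗(X,ℚ(1)) corresponds to the image of ⊕_{x∈X^{(1)}} ℂ*⊗_ℤℚ. -/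
/-!
# Statement 18 (part of the proof of Proposition `proposition-cohomology-Gersten` (iii))

Let `X` be a smooth connected complex algebraic variety.  The kernel of the
natural surjection `H¹(G_𝓗(X,2)) → H¹(G_HS(X,2))` equals the image of
`⊕_{x∈X^{(1)}} ℂ*⊗_ℤℚ` in `H¹(G_𝓗(X,2))`.

The Gersten complexes enter as abstract data.  `G_𝓗(X,2)` is the complex
`AH --d0H--> BH --d1H--> C` with `AH = H²_𝓗(η,ℚ(2))`,
`BH = ⊕_{x∈X^{(1)}} H¹_𝓗(x,ℚ(1))`, `C = ⊕_{x∈X^{(2)}} ℚ`; `G_HS(X,2)` is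
the complex `AS --d0S--> BS --d1S--> C` with
`AS = Hom_MHS(ℚ,H²(η,ℚ)(2))`, `BS = ⊕_{x∈X^{(1)}} Hom_MHS(ℚ,H¹(x,ℚ)(1))`.
The projections `πA : AH → AS` and `πB : BH → BS` come from the short exact
sequences `0 → ℂ*⊗_ℤℚ → H¹_𝓗(x,ℚ(1)) → Hom_MHS(ℚ,H¹(x,ℚ)(1)) → 0` (and the
analogous ones at `η`); in particular `ker πB = ⊕_{x∈X^{(1)}} ℂ*⊗_ℤℚ`, which
is recorded by the additive isomorphism `eC`.  On the last term `C` the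
projection is the identity.  `H¹` of a complex `A → B → C` is
`ker d1 / im d0`, and `Φ` is the induced map on `H¹`, characterized by
`Φ [b] = [πB b]`.
-/

open DirectSum LinearMap TensorProduct

theorem ker_H1_GH_to_H1_GHS
    -- the sets of codimension `1` and `2` points of `X`
    (pt1 pt2 : Type)
    -- the terms of the Gersten complex `G_𝓗(X,2)`
    (AH BH : Type) [AddCommGroup AH] [Module ℚ AH] [AddCommGroup BH] [Module ℚ BH]
    (C : Type) [AddCommGroup C] [Module ℚ C]
    (d0H : AH →ₗ[ℚ] BH) (d1H : BH →ₗ[ℚ] C) (hddH : d1H.comp d0H = 0)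
    -- the terms of the complex `G_HS(X,2)`
    (AS BS : Type) [AddCommGroup AS] [Module ℚ AS] [AddCommGroup BS] [Module ℚ BS]
    (d0S : AS →ₗ[ℚ] BS) (d1S : BS →ₗ[ℚ] C) (hddS : d1S.comp d0S = 0)
    -- the projections `G_𝓗(X,2) → G_HS(X,2)` (the identity on `C`)
    (πA : AH →ₗ[ℚ] AS) (πB : BH →ₗ[ℚ] BS)
    (hπAsurj : Function.Surjective πA) (hπBsurj : Function.Surjective πB)
    (hsq0 : d0S.comp πA = πB.comp d0H) (hsq1 : d1S.comp πB = d1H)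
    -- `ker πB = ⊕_{x∈X^{(1)}} ℂ*⊗_ℤℚ`
    (eC : ↥(ker πB) ≃+ ⨁ _x : pt1, ℚ ⊗[ℤ] Additive ℂˣ)
    -- the induced map `Φ : H¹(G_𝓗(X,2)) → H¹(G_HS(X,2))`, `Φ [b] = [πB b]`
    (Φ : (↥(ker d1H) ⧸ Submodule.comap (ker d1H).subtype (range d0H)) →ₗ[ℚ]
         (↥(ker d1S) ⧸ Submodule.comap (ker d1S).subtype (range d0S)))
    (hΦ : ∀ (b : BH) (hb : b ∈ ker d1H),
      Φ (Submodule.mkQ _ ⟨b, hb⟩) =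
        Submodule.mkQ _ ⟨πB b, mem_ker.mpr (by
          rw [← LinearMap.comp_apply, hsq1]; exact mem_ker.mp hb)⟩) :
    -- the kernel of `Φ` is the image of `⊕_{x∈X^{(1)}} ℂ*⊗_ℤℚ = ker πB`
    ker Φ =
      Submodule.map
        (Submodule.mkQ (Submodule.comap (ker d1H).subtype (range d0H)))
        (Submodule.comap (ker d1H).subtype (ker πB)) := by
  apply le_antisymm
  · rintro q hq
    obtain ⟨⟨b, hb⟩, rfl⟩ := Submodule.mkQ_surjective _ q
    have h1 : Φ (Submodule.mkQ _ ⟨b, hb⟩) = 0 := hq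
    rw [hΦ b hb] at h1
    have h2 : πB b ∈ range d0S := by
      have := (Submodule.Quotient.mk_eq_zero _).mp h1
      simpa using this
    obtain ⟨a', ha'⟩ := h2
    obtain ⟨a, rfl⟩ := hπAsurj a'
    have hb' : b - d0H a ∈ ker d1H := by
      have : d1H (d0H a) = 0 := by
        rw [← LinearMap.comp_apply, hddH]; rfl
      simp [mem_ker, mem_ker.mp hb, this]
    refine ⟨⟨b - d0H a, hb'⟩, ?_, ?_⟩
    · show b - d0H a ∈ ker πB
      have : πB (d0H a) = πB b := by
        rw [← LinearMap.comp_apply, ← hsq0, LinearMap.comp_apply, ha']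
      simp [mem_ker, this]
    · rw [← sub_eq_zero, ← map_sub, Submodule.mkQ_apply, Submodule.Quotient.mk_eq_zero]
      exact ⟨-a, by simp⟩
  · rintro q ⟨⟨b, hb⟩, hbker, rfl⟩
    have hb0 : πB b = 0 := hbker
    rw [mem_ker, hΦ b hb]
    rw [Submodule.mkQ_apply, Submodule.Quotient.mk_eq_zero]
    show πB b ∈ range d0S
    rw [hb0]
    exact zero_mem _
end
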